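/- arXiv:1903.05746 — 4 statements merged into one kernel-verified Lean document; each statement's English description precedes it below -/
import Mathlib

section
/- Let F : ℝ^n ⇉ ℝ^m be a set-valued mapping, (x̄, ȳ) ∈ gph F, and suppose there exist κ > 0 and a neighborhood U of x̄ with d(x, F⁻¹(ȳ)) ≤ κ·d(ȳ, F(x)) for all x ∈ U, and moreover x̄ is an isolated point of F⁻¹(ȳ). Then the graphical derivative satisfies DF(x̄|ȳ)⁻¹(0) = {0}; that is, if (w, 0) belongs to the tangent cone to gph F at (x̄, ȳ), then w = 0. -/
open Filter

/-- The Bouligand (contingent) tangent cone to a set `s` at a point `p`. -/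
def contingentCone {F : Type*} [NormedAddCommGroup F] [NormedSpace ℝ F]
    (s : Set F) (p : F) : Set F :=
  {v | ∃ t : ℕ → ℝ, ∃ w : ℕ → F, (∀ k, 0 < t k) ∧ Tendsto t atTop (nhds 0) ∧
    Tendsto w atTop (nhds v) ∧ ∀ k, p + t k • w k ∈ s}

/-!
Subregularity bounds `d(x, F⁻¹(ȳ))` by `κ · d(ȳ, F(x))`, and near an isolated point `x̄` of
`F⁻¹(ȳ)` the distance `d(x, F⁻¹(ȳ))` is just `‖x - x̄‖`. So near `x̄` we get
`‖x - x̄‖ ≤ κ · d(ȳ, F(x))`. Along a tangent sequence `(x̄ + tₖ uₖ, ȳ + tₖ vₖ) ∈ gph F` this gives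
`tₖ ‖uₖ‖ ≤ κ tₖ ‖vₖ‖`; dividing by `tₖ` and letting `vₖ → 0` forces `w = lim uₖ = 0`.
-/

open Metric Topology

section StrongSubregularity

variable {X Y : Type*} [PseudoMetricSpace X] [PseudoEMetricSpace Y]

theorem eventually_edist_le_infEDist_of_isolated {s : Set X} {a : X}
    (h : ∀ᶠ z in 𝓝 a, z ∈ s → z = a) : ∀ᶠ x in 𝓝 a, edist x a ≤ infEDist x s := by
  obtain ⟨r, hr, hball⟩ := Metric.eventually_nhds_iff.1 h
  filter_upwards [ball_mem_nhds a (half_pos hr)] with x hx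
  refine le_infEDist.2 fun z hz => ?_
  by_cases hza : dist z a < r
  · rw [hball hza hz]
  · rw [edist_dist, edist_dist]
    refine ENNReal.ofReal_le_ofReal ?_
    linarith [dist_triangle z x a, dist_comm x z, mem_ball.1 hx]

theorem eventually_edist_le_mul_infEDist_of_subregular_of_isolated {F : X → Set Y}
    {xb : X} {yb : Y} {C : ENNReal}
    (hsub : ∀ᶠ x in 𝓝 xb, infEDist x {u | yb ∈ F u} ≤ C * infEDist yb (F x))
    (hiso : ∀ᶠ x in 𝓝 xb, yb ∈ F x → x = xb) :
    ∀ᶠ x in 𝓝 xb, edist x xb ≤ C * infEDist yb (F x) :=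
  ((eventually_edist_le_infEDist_of_isolated hiso).and hsub).mono fun _ h => h.1.trans h.2

end StrongSubregularity

section TangentCone

variable {E G : Type*} [NormedAddCommGroup E] [NormedSpace ℝ E]
  [NormedAddCommGroup G] [NormedSpace ℝ G] {F : E → Set G} {xb : E} {yb : G} {C : ENNReal}

theorem enorm_le_mul_enorm_of_edist_le_mul_infEDist {t : ℝ} {u : E} {v : G} (ht : 0 < t)
    (hest : edist (xb + t • u) xb ≤ C * infEDist yb (F (xb + t • u)))
    (hmem : yb + t • v ∈ F (xb + t • u)) : ‖u‖ₑ ≤ C * ‖v‖ₑ := by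
  have hdist : infEDist yb (F (xb + t • u)) ≤ ‖t‖ₑ * ‖v‖ₑ := by
    simpa [edist_eq_enorm_sub, enorm_smul] using infEDist_le_edist_of_mem (x := yb) hmem
  have hscaled : ‖t‖ₑ * ‖u‖ₑ ≤ ‖t‖ₑ * (C * ‖v‖ₑ) := by
    calc ‖t‖ₑ * ‖u‖ₑ = edist (xb + t • u) xb := by simp [edist_eq_enorm_sub, enorm_smul]
      _ ≤ C * (‖t‖ₑ * ‖v‖ₑ) := hest.trans (mul_le_mul_right hdist C)
      _ = ‖t‖ₑ * (C * ‖v‖ₑ) := by ring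
  exact (ENNReal.mul_le_mul_iff_right (by simpa using ht.ne') enorm_ne_top).1 hscaled

theorem eq_zero_of_mem_contingentCone_graph (hC : C ≠ ⊤)
    (hest : ∀ᶠ x in 𝓝 xb, edist x xb ≤ C * infEDist yb (F x)) {w : E}
    (hw : (w, (0 : G)) ∈ contingentCone {p : E × G | p.2 ∈ F p.1} (xb, yb)) : w = 0 := by
  obtain ⟨t, p, ht, ht0, hpw, hmem⟩ := hw
  have hu : Tendsto (fun k => (p k).1) atTop (𝓝 w) := (continuous_fst.tendsto _).comp hpw
  have hv : Tendsto (fun k => (p k).2) atTop (𝓝 0) := (continuous_snd.tendsto _).comp hpw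
  have hx : Tendsto (fun k => xb + t k • (p k).1) atTop (𝓝 xb) := by
    simpa using tendsto_const_nhds.add (ht0.smul hu)
  have hbound : ∀ᶠ k in atTop, ‖(p k).1‖ₑ ≤ C * ‖(p k).2‖ₑ :=
    (hx.eventually hest).mono fun k hk =>
      enorm_le_mul_enorm_of_edist_le_mul_infEDist (ht k) hk (hmem k)
  have hCv : Tendsto (fun k => C * ‖(p k).2‖ₑ) atTop (𝓝 0) := by
    simpa using ENNReal.Tendsto.const_mul hv.enorm (Or.inr hC)
  have : ‖w‖ₑ ≤ 0 := le_of_tendsto_of_tendsto hu.enorm hCv hbound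
  simpa using this

end TangentCone

theorem stmt6_general {n m : ℕ}
    (F : EuclideanSpace ℝ (Fin n) → Set (EuclideanSpace ℝ (Fin m)))
    (xb : EuclideanSpace ℝ (Fin n)) (yb : EuclideanSpace ℝ (Fin m))
    (κ : ℝ)
    (U : Set (EuclideanSpace ℝ (Fin n))) (hU : U ∈ nhds xb)
    (hsubreg : ∀ x ∈ U, EMetric.infEdist x {u | yb ∈ F u} ≤
      ENNReal.ofReal κ * EMetric.infEdist yb (F x))
    (hisolated : ∃ V ∈ nhds xb, ∀ x ∈ V, yb ∈ F x → x = xb) :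
    ∀ w : EuclideanSpace ℝ (Fin n),
      (w, (0 : EuclideanSpace ℝ (Fin m))) ∈
        contingentCone {p : EuclideanSpace ℝ (Fin n) × EuclideanSpace ℝ (Fin m) |
          p.2 ∈ F p.1} (xb, yb) → w = 0 := fun _ =>
  eq_zero_of_mem_contingentCone_graph ENNReal.ofReal_ne_top
    (eventually_edist_le_mul_infEDist_of_subregular_of_isolated
      (mem_of_superset hU hsubreg) (eventually_iff_exists_mem.2 hisolated))

/-- One direction of the Levy–Rockafellar criterion: if `F` is metrically subregular at
`xb` for `yb` and `xb` is an isolated point of `F⁻¹(yb)`, then `DF(xb|yb)⁻¹(0) = {0}`. -/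
theorem stmt6 {n m : ℕ}
    (F : EuclideanSpace ℝ (Fin n) → Set (EuclideanSpace ℝ (Fin m)))
    (xb : EuclideanSpace ℝ (Fin n)) (yb : EuclideanSpace ℝ (Fin m))
    (hgph : yb ∈ F xb)
    (κ : ℝ) (hκ : 0 < κ)
    (U : Set (EuclideanSpace ℝ (Fin n))) (hU : U ∈ nhds xb)
    (hsubreg : ∀ x ∈ U, EMetric.infEdist x {u | yb ∈ F u} ≤
      ENNReal.ofReal κ * EMetric.infEdist yb (F x))
    (hisolated : ∃ V ∈ nhds xb, ∀ x ∈ V, yb ∈ F x → x = xb) :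
    ∀ w : EuclideanSpace ℝ (Fin n),
      (w, (0 : EuclideanSpace ℝ (Fin m))) ∈
        contingentCone {p : EuclideanSpace ℝ (Fin n) × EuclideanSpace ℝ (Fin m) |
          p.2 ∈ F p.1} (xb, yb) → w = 0 :=
  stmt6_general F xb yb κ U hU hsubreg hisolated
end

section
/- Define f : ℝ → ℝ by f(x) = x for x > 1, f(x) = α_{n+1}x + β_{n+1} for α_{n+1} < x ≤ α_n (n ≥ 0), f(0) = β, and f(x) = f(−x) for x < 0, where α_n = 1/(n+1)!, β_0 = 0, β_{n+1} = Σ_{k=0}^{n} 1/(k!(k+2)!), and β = lim β_n. Then f is convex and continuous on ℝ. -/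
/-!
The affine pieces `ℓₙ(x) = αₙ x + βₙ` satisfy `ℓₙ₊₁(x) - ℓₙ(x) = (αₙ - αₙ₊₁)(αₙ - x)`, so at a
point `x ∈ (αₙ₊₁, αₙ]` the values `ℓₘ(x)` increase up to `m = n + 1` and decrease afterwards.
Hence `f(x) = supₘ ℓₘ(|x|)` for every `x` (at `0` the supremum is `lim βₘ = β`): `f` is a
supremum of convex functions, so it is convex, and a convex function on `ℝ` is continuous.
-/

open Nat

/-- `α n = 1/(n+1)!`. -/
noncomputable def alph (n : ℕ) : ℝ := 1 / ((n + 1)! : ℝ)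

/-- `β 0 = 0`, `β (n+1) = ∑_{k=0}^{n} 1/(k!(k+2)!)`. -/
noncomputable def bet (n : ℕ) : ℝ := ∑ k ∈ Finset.range n, 1 / ((k ! : ℝ) * ((k + 2)! : ℝ))

/-- `β = lim β n = ∑_{k=0}^{∞} 1/(k!(k+2)!)`. -/
noncomputable def betLim : ℝ := ∑' k : ℕ, 1 / ((k ! : ℝ) * ((k + 2)! : ℝ))

theorem ConvexOn.ciSup {E ι : Type*} [AddCommMonoid E] [Module ℝ E] [Nonempty ι] {s : Set E}
    {f : ι → E → ℝ} (hf : ∀ i, ConvexOn ℝ s (f i))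
    (hbdd : ∀ x ∈ s, BddAbove (Set.range fun i => f i x)) :
    ConvexOn ℝ s fun x => ⨆ i, f i x := by
  refine ⟨(hf (Classical.arbitrary ι)).1, fun x hx y hy a b ha hb hab => ciSup_le fun i => ?_⟩
  calc f i (a • x + b • y) ≤ a • f i x + b • f i y := (hf i).2 hx hy ha hb hab
    _ ≤ a • (⨆ i, f i x) + b • ⨆ i, f i y := by
      gcongr
      exacts [le_ciSup (hbdd x hx) i, le_ciSup (hbdd y hy) i]

theorem Nat.apply_le_of_le_succ_of_succ_le {α : Type*} [Preorder α] {u : ℕ → α} {N : ℕ}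
    (hup : ∀ n < N, u n ≤ u (n + 1)) (hdown : ∀ n ≥ N, u (n + 1) ≤ u n) (m : ℕ) :
    u m ≤ u N := by
  rcases le_total m N with h | h
  · clear hdown
    induction N, h using Nat.le_induction with
    | base => exact le_rfl
    | succ N hmN ih => exact (ih fun n hn => hup n (by omega)).trans (hup N (by omega))
  · induction m, h using Nat.le_induction with
    | base => exact le_rfl
    | succ m hNm ih => exact (hdown m hNm).trans ih

lemma alph_pos (n : ℕ) : 0 < alph n := by
  unfold alph
  positivity

lemma alph_zero : alph 0 = 1 := by simp [alph]

lemma alph_strictAnti : StrictAnti alph := by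
  refine strictAnti_nat_of_succ_lt fun n => ?_
  unfold alph
  apply one_div_lt_one_div_of_lt (by positivity)
  exact_mod_cast (Nat.factorial_lt n.succ_pos).2 (Nat.lt_succ_self _)

lemma alph_le_one (n : ℕ) : alph n ≤ 1 :=
  alph_zero ▸ alph_strictAnti.antitone n.zero_le

lemma exists_alph_lt {x : ℝ} (hx : 0 < x) : ∃ n, alph n < x := by
  obtain ⟨n, hn⟩ := exists_nat_gt (1 / x)
  refine ⟨n, (one_div_lt (by positivity) hx).2 ?_⟩
  have : (n : ℝ) + 1 ≤ (n + 1)! := by exact_mod_cast Nat.self_le_factorial (n + 1)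
  linarith

lemma exists_first_alph_lt {x : ℝ} (hx : 0 < x) :
    ∃ N, alph N < x ∧ ∀ m < N, x ≤ alph m := by
  classical
  exact ⟨Nat.find (exists_alph_lt hx), Nat.find_spec (exists_alph_lt hx),
    fun m hm => le_of_not_gt (Nat.find_min (exists_alph_lt hx) hm)⟩

lemma bet_succ (n : ℕ) : bet (n + 1) = bet n + (alph n - alph (n + 1)) * alph n := by
  have : (n ! : ℝ) ≠ 0 := by positivity
  rw [bet, bet, Finset.sum_range_succ, alph, alph, Nat.factorial_succ (n + 1),
    Nat.factorial_succ n]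
  push_cast
  field_simp
  ring

lemma bet_mono : Monotone bet := by
  refine monotone_nat_of_le_succ fun n => ?_
  rw [bet_succ]
  have := alph_strictAnti n.lt_succ_self
  nlinarith [alph_pos n]

lemma summable_one_div_factorial_mul_factorial_add_two :
    Summable fun k : ℕ => 1 / ((k ! : ℝ) * ((k + 2)! : ℝ)) := by
  refine (Real.summable_pow_div_factorial 1).of_nonneg_of_le (fun k => by positivity)
    fun k => ?_
  rw [one_pow]
  have : (1 : ℝ) ≤ (k + 2)! := by exact_mod_cast (k + 2).factorial_pos
  exact one_div_le_one_div_of_le (by positivity) (by nlinarith [(Nat.cast_pos (α := ℝ)).2 k.factorial_pos])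

lemma isLUB_range_bet : IsLUB (Set.range bet) betLim :=
  isLUB_of_tendsto_atTop bet_mono
    summable_one_div_factorial_mul_factorial_add_two.hasSum.tendsto_sum_nat

noncomputable def piece (n : ℕ) (x : ℝ) : ℝ := alph n * x + bet n

lemma piece_succ_sub (n : ℕ) (x : ℝ) :
    piece (n + 1) x - piece n x = (alph n - alph (n + 1)) * (alph n - x) := by
  rw [piece, piece, bet_succ]
  ring

noncomputable def envelope (x : ℝ) : ℝ := ⨆ n, piece n |x|

lemma envelope_neg (x : ℝ) : envelope (-x) = envelope x := by
  simp only [envelope, abs_neg]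

lemma envelope_zero : envelope 0 = betLim := by
  simpa [envelope, piece] using isLUB_range_bet.ciSup_eq

lemma envelope_eq_piece {x : ℝ} {N : ℕ} (hN : alph N < x) (hmin : ∀ m < N, x ≤ alph m) :
    envelope x = piece N x := by
  have hx : 0 < x := (alph_pos N).trans hN
  have hmax : ∀ m, piece m x ≤ piece N x := by
    refine Nat.apply_le_of_le_succ_of_succ_le (fun n hn => ?_) (fun n hn => ?_)
    · have := alph_strictAnti n.lt_succ_self
      nlinarith [piece_succ_sub n x, hmin n hn]
    · have := alph_strictAnti n.lt_succ_self
      nlinarith [piece_succ_sub n x, alph_strictAnti.antitone hn]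
  rw [envelope, abs_of_pos hx]
  exact ciSup_eq_of_forall_le_of_forall_lt_exists_gt hmax fun w hw => ⟨N, hw⟩

lemma convexOn_envelope : ConvexOn ℝ Set.univ envelope := by
  refine ConvexOn.ciSup (fun n => ?_) fun x _ => ⟨|x| + betLim, ?_⟩
  · exact ((convexOn_norm convex_univ).smul (alph_pos n).le).add_const (bet n)
  · rintro _ ⟨n, rfl⟩
    have := mul_le_mul_of_nonneg_right (alph_le_one n) (abs_nonneg x)
    have := isLUB_range_bet.1 ⟨n, rfl⟩
    simp only [piece]
    linarith

/-- The piecewise affine function of Example 3.5: `f(x) = x` for `x > 1`,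
`f(x) = α_{n+1} x + β_{n+1}` on `(α_{n+1}, α_n]`, `f(0) = β`, `f(x) = f(-x)` for `x < 0`.
Then `f` is convex and continuous. -/
theorem stmt8 (f : ℝ → ℝ)
    (h1 : ∀ x : ℝ, 1 < x → f x = x)
    (h2 : ∀ n : ℕ, ∀ x : ℝ, alph (n + 1) < x → x ≤ alph n → f x = alph (n + 1) * x + bet (n + 1))
    (h3 : f 0 = betLim)
    (h4 : ∀ x : ℝ, x < 0 → f x = f (-x)) :
    ConvexOn ℝ Set.univ f ∧ Continuous f := by
  have hpos : ∀ x, 0 < x → f x = envelope x := by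
    intro x hx
    obtain ⟨N, hN, hmin⟩ := exists_first_alph_lt hx
    rw [envelope_eq_piece hN hmin]
    rcases N with _ | n
    · simp [h1 x (alph_zero ▸ hN), piece, alph_zero, bet]
    · exact h2 n x hN (hmin n n.lt_succ_self)
  obtain rfl : f = envelope := funext fun x => by
    rcases lt_trichotomy x 0 with h | rfl | h
    · rw [h4 x h, hpos (-x) (neg_pos.2 h), envelope_neg]
    · rw [h3, envelope_zero]
    · exact hpos x h
  exact ⟨convexOn_envelope, continuousOn_univ.1 (convexOn_envelope.continuousOn isOpen_univ)⟩
end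

section
/- Let f : ℝ^n → ℝ ∪ {∞} be proper, lower semicontinuous and convex, x̄ a minimizer of f, and suppose the quadratic growth condition holds: there exist κ, γ > 0 with f(x) ≥ f(x̄) + (κ/2)‖x − x̄‖² for all x ∈ B_γ(x̄). Then for every w ∈ ℝ^n and every z ∈ D(∂f)(x̄|0)(w) one has ⟨z, w⟩ ≥ (κ/2)‖w‖². -/
open Filter

/-- The convex subdifferential of an extended-real-valued function. -/
def convexSubdiff {n : ℕ} (f : EuclideanSpace ℝ (Fin n) → EReal)
    (x : EuclideanSpace ℝ (Fin n)) : Set (EuclideanSpace ℝ (Fin n)) :=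
  {v | ∀ u, f x + (((inner ℝ v (u - x) : ℝ)) : EReal) ≤ f u}

/-!
If `t • z` is a subgradient of `f` at `x = x̄ + t • w`, the subgradient inequality from `x`
towards `x̄` gives `f x - t² ⟪z, w⟫ ≤ f x̄`, while quadratic growth gives
`f x̄ + (κ/2) t² ‖w‖² ≤ f x` as soon as `t ‖w‖ ≤ γ`. Adding the two and dividing by `t²`
yields `(κ/2) ‖w‖² ≤ ⟪z, w⟫` along the sequence defining the contingent cone, and the
inequality passes to the limit.
-/

theorem EReal.add_le_zero_of_add_le_of_add_le {a b : EReal} {r s : ℝ}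
    (ha_top : a ≠ ⊤) (ha_bot : a ≠ ⊥) (hab : a + r ≤ b) (hba : b + s ≤ a) : r + s ≤ 0 := by
  have hb_top : b ≠ ⊤ := fun hb => ha_top (top_le_iff.mp (by simpa [hb] using hba))
  have hb_bot : b ≠ ⊥ := fun hb => ha_bot (by simpa [hb] using hab)
  lift a to ℝ using ⟨ha_top, ha_bot⟩
  lift b to ℝ using ⟨hb_top, hb_bot⟩
  norm_cast at hab hba
  linarith

section Subgradient

variable {n : ℕ} {f : EuclideanSpace ℝ (Fin n) → EReal}

theorem le_inner_sub_of_mem_convexSubdiff {x₀ x v : EuclideanSpace ℝ (Fin n)} {c : ℝ}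
    (h₀_top : f x₀ ≠ ⊤) (h₀_bot : f x₀ ≠ ⊥) (hv : v ∈ convexSubdiff f x)
    (hgrowth : f x₀ + (c : EReal) ≤ f x) : c ≤ inner ℝ v (x - x₀) := by
  have h := EReal.add_le_zero_of_add_le_of_add_le h₀_top h₀_bot hgrowth (hv x₀)
  rw [← neg_sub x x₀, inner_neg_right] at h
  linarith

theorem half_mul_norm_sq_le_inner_of_smul_mem_convexSubdiff
    {x₀ w z : EuclideanSpace ℝ (Fin n)} {t κ : ℝ} (ht : 0 < t)
    (h₀_top : f x₀ ≠ ⊤) (h₀_bot : f x₀ ≠ ⊥) (hz : t • z ∈ convexSubdiff f (x₀ + t • w))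
    (hgrowth : f x₀ + ((κ / 2 * ‖t • w‖ ^ 2 : ℝ) : EReal) ≤ f (x₀ + t • w)) :
    κ / 2 * ‖w‖ ^ 2 ≤ inner ℝ z w := by
  have h := le_inner_sub_of_mem_convexSubdiff h₀_top h₀_bot hz hgrowth
  rw [add_sub_cancel_left, real_inner_smul_left, real_inner_smul_right, norm_smul,
    Real.norm_of_nonneg ht.le] at h
  have ht2 : 0 < t ^ 2 := by positivity
  nlinarith

end Subgradient

theorem stmt10_general {n : ℕ} (f : EuclideanSpace ℝ (Fin n) → EReal)
    (hproper_bot : ∀ x, f x ≠ ⊥)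
    (xb : EuclideanSpace ℝ (Fin n)) (hdom : f xb ≠ ⊤)
    (κ : ℝ) (γ : ℝ) (hγ : 0 < γ)
    (hQG : ∀ x, ‖x - xb‖ ≤ γ → f xb + ((κ / 2 * ‖x - xb‖ ^ 2 : ℝ) : EReal) ≤ f x) :
    ∀ w z : EuclideanSpace ℝ (Fin n),
      (w, z) ∈ contingentCone
        {p : EuclideanSpace ℝ (Fin n) × EuclideanSpace ℝ (Fin n) |
          p.2 ∈ convexSubdiff f p.1} (xb, 0) →
      κ / 2 * ‖w‖ ^ 2 ≤ (inner ℝ z w : ℝ) := by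
  rintro w z ⟨t, p, ht, ht_lim, hp_lim, hp_mem⟩
  have hw_lim : Tendsto (fun k => (p k).1) atTop (nhds w) :=
    (continuous_fst.tendsto _).comp hp_lim
  have hz_lim : Tendsto (fun k => (p k).2) atTop (nhds z) :=
    (continuous_snd.tendsto _).comp hp_lim
  have hstep_lim : Tendsto (fun k => ‖t k • (p k).1‖) atTop (nhds 0) := by
    simpa using (ht_lim.smul hw_lim).norm
  have hineq : ∀ᶠ k in atTop, κ / 2 * ‖(p k).1‖ ^ 2 ≤ inner ℝ (p k).2 (p k).1 := by
    filter_upwards [hstep_lim.eventually_le_const hγ] with k hk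
    have hgrowth := hQG (xb + t k • (p k).1) (by rwa [add_sub_cancel_left])
    rw [add_sub_cancel_left] at hgrowth
    exact half_mul_norm_sq_le_inner_of_smul_mem_convexSubdiff (ht k) hdom (hproper_bot xb)
      (by simpa using hp_mem k) hgrowth
  exact le_of_tendsto_of_tendsto ((hw_lim.norm.pow 2).const_mul _) (hz_lim.inner hw_lim) hineq

/-- For a proper l.s.c. convex function satisfying the quadratic growth condition at a
minimizer `xb`, every `z ∈ D(∂f)(xb|0)(w)` satisfies `⟪z, w⟫ ≥ (κ/2)‖w‖²`. -/
theorem stmt10 {n : ℕ} (f : EuclideanSpace ℝ (Fin n) → EReal)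
    (hproper_bot : ∀ x, f x ≠ ⊥)
    (xb : EuclideanSpace ℝ (Fin n)) (hdom : f xb ≠ ⊤)
    (hlsc : LowerSemicontinuous f)
    (hconv : Convex ℝ {p : EuclideanSpace ℝ (Fin n) × ℝ | f p.1 ≤ (p.2 : EReal)})
    (hmin : ∀ x, f xb ≤ f x)
    (κ : ℝ) (hκ : 0 < κ) (γ : ℝ) (hγ : 0 < γ)
    (hQG : ∀ x, ‖x - xb‖ ≤ γ → f xb + ((κ / 2 * ‖x - xb‖ ^ 2 : ℝ) : EReal) ≤ f x) :
    ∀ w z : EuclideanSpace ℝ (Fin n),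
      (w, z) ∈ contingentCone
        {p : EuclideanSpace ℝ (Fin n) × EuclideanSpace ℝ (Fin n) |
          p.2 ∈ convexSubdiff f p.1} (xb, 0) →
      κ / 2 * ‖w‖ ^ 2 ≤ (inner ℝ z w : ℝ) :=
  stmt10_general f hproper_bot xb hdom κ γ hγ hQG
end

section
/- Define f : ℝ → ℝ by f(x) = x for x ∈ {0} ∪ [1,∞); f(x) = 1/2^n for x ∈ [3/2^{n+2}, 1/2^n), n ≥ 0; f(x) = 2x − 1/2^{n+1} for x ∈ [1/2^{n+1}, 3/2^{n+2}), n ≥ 0; and f(x) = f(−x) for x < 0. Then f(x) ≥ f(0) + x² for all x ∈ [−1, 1]; in particular x̄ = 0 is a strong local minimizer of f with modulus 2. -/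
/-- The staircase function of Example 3.6: `f(x) = x` on `{0} ∪ [1,∞)`, `f(x) = 1/2ⁿ` on
`[3/2^{n+2}, 1/2ⁿ)`, `f(x) = 2x - 1/2^{n+1}` on `[1/2^{n+1}, 3/2^{n+2})`, `f(-x) = f(x)`.
Then `f(x) ≥ f(0) + x²` for all `x ∈ [-1,1]`, so `0` is a strong local minimizer with
modulus 2. -/
theorem stmt11 (f : ℝ → ℝ)
    (h0 : f 0 = 0)
    (h1 : ∀ x : ℝ, 1 ≤ x → f x = x)
    (h2 : ∀ n : ℕ, ∀ x : ℝ, 3 / 2 ^ (n + 2) ≤ x → x < 1 / 2 ^ n → f x = 1 / 2 ^ n)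
    (h3 : ∀ n : ℕ, ∀ x : ℝ, 1 / 2 ^ (n + 1) ≤ x → x < 3 / 2 ^ (n + 2) →
      f x = 2 * x - 1 / 2 ^ (n + 1))
    (h4 : ∀ x : ℝ, x < 0 → f x = f (-x)) :
    ∀ x : ℝ, |x| ≤ 1 → f 0 + x ^ 2 ≤ f x := by
  have key : ∀ x : ℝ, 0 ≤ x → x ≤ 1 → x ^ 2 ≤ f x := by
    intro x hx0 hx1
    have hsq : x ^ 2 ≤ x := by nlinarith
    rcases eq_or_lt_of_le hx0 with h | hpos
    · simp [← h, h0]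
    rcases eq_or_lt_of_le hx1 with h | hlt1
    · rw [h, h1 1 le_rfl]; norm_num
    have hex : ∃ n : ℕ, (1:ℝ) / 2 ^ (n + 1) ≤ x := by
      obtain ⟨n, hn⟩ := exists_pow_lt_of_lt_one hpos (by norm_num : (1:ℝ)/2 < 1)
      refine ⟨n, le_of_lt ?_⟩
      calc (1:ℝ) / 2 ^ (n + 1) ≤ 1 / 2 ^ n := by
            apply div_le_div_of_nonneg_left (by norm_num) (by positivity)
            exact pow_le_pow_right₀ (by norm_num) (Nat.le_succ n)
        _ = ((1:ℝ)/2) ^ n := by rw [div_pow]; norm_num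
        _ < x := hn
    classical
    obtain ⟨n, hn, hmin⟩ : ∃ n : ℕ, (1:ℝ) / 2 ^ (n + 1) ≤ x ∧
        ∀ m, m < n → ¬ ((1:ℝ) / 2 ^ (m + 1) ≤ x) :=
      ⟨Nat.find hex, Nat.find_spec hex, fun m hm => Nat.find_min hex hm⟩
    have hup : x < (1:ℝ) / 2 ^ n := by
      cases' n with m
      · simpa using hlt1
      · have := hmin m (Nat.lt_succ_self m)
        push_neg at this
        exact this
    rcases lt_or_ge x (3 / 2 ^ (n + 2)) with hc | hc
    · rw [h3 n x hn hc]
      linarith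
    · rw [h2 n x hc hup]
      linarith
  intro x hx
  rw [h0, zero_add]
  rcases le_or_gt 0 x with hx0 | hx0
  · exact key x hx0 (by rwa [abs_of_nonneg hx0] at hx)
  · rw [h4 x hx0]
    have := key (-x) (by linarith) (by rw [abs_of_neg hx0] at hx; linarith)
    simpa using this
end
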